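/- If every model of an LP^s theory T is consistent (no relation takes the paradoxical value on any tuple), then the LP^s consequences of T coincide with the classical consequences of T, where formulas are interpreted classically with ⇒ read as material implication. -/
import Mathlib


inductive TV where
  | top | par | bot
deriving DecidableEq

open TV

def toR : TV → ℚ
  | top => 1
  | par => 1/2
  | bot => 0

def tvNeg : TV → TV
  | top => bot
  | par => par
  | bot => top

def tvAnd : TV → TV → TV
  | top, b   => b
  | par, top => par
  | par, par => par
  | par, bot => bot
  | bot, _   => bot

/-- Strong implication: ⊤ if a ≤ b in the order ⊥ < + < ⊤, else ⊥. -/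
def tvSimp (a b : TV) : TV := if toR a ≤ toR b then top else bot

def des (a : TV) : Prop := a = top ∨ a = par

/-- Propositional LP^s formulas over atoms indexed by ℕ, built from ¬, ∧, ⇒. -/
inductive Fm where
  | var : ℕ → Fm
  | neg : Fm → Fm
  | and : Fm → Fm → Fm
  | simp : Fm → Fm → Fm

/-- Three-valued LP^s evaluation. -/
def evalS : Fm → (ℕ → TV) → TV
  | .var i, v => v i
  | .neg φ, v => tvNeg (evalS φ v)
  | .and φ ψ, v => tvAnd (evalS φ v) (evalS ψ v)
  | .simp φ ψ, v => tvSimp (evalS φ v) (evalS ψ v)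

/-- Classical two-valued evaluation, reading ⇒ as material implication. -/
def evalC : Fm → (ℕ → Bool) → Bool
  | .var i, w => w i
  | .neg φ, w => !(evalC φ w)
  | .and φ ψ, w => evalC φ w && evalC ψ w
  | .simp φ ψ, w => !(evalC φ w) || evalC ψ w

/-- A valuation (LP^s model) of T. -/
def modelsLPs (T : Set Fm) (v : ℕ → TV) : Prop := ∀ ψ ∈ T, des (evalS ψ v)


def b2t (b : Bool) : TV := if b then top else bot

lemma evalS_b2t (φ : Fm) (w : ℕ → Bool) :
    evalS φ (fun n => b2t (w n)) = b2t (evalC φ w) := by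
  induction φ with
  | var i => rfl
  | neg φ ih => simp only [evalS, evalC, ih]; cases evalC φ w <;> rfl
  | and φ ψ ih1 ih2 =>
      simp only [evalS, evalC, ih1, ih2]
      cases evalC φ w <;> cases evalC ψ w <;> rfl
  | simp φ ψ ih1 ih2 =>
      simp only [evalS, evalC, ih1, ih2]
      cases evalC φ w <;> cases evalC ψ w <;> rfl

/-- if every LP^s valuation designating all of T is consistent
(never assigns the paradoxical value + to an atom), then the LP^s consequences
of T coincide with its classical consequences. -/
theorem consistent_models_give_classical_consequences
    (T : Set Fm)
    (hcons : ∀ v : ℕ → TV, modelsLPs T v → ∀ n : ℕ, v n ≠ par) :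
    ∀ φ : Fm,
      ((∀ v : ℕ → TV, modelsLPs T v → des (evalS φ v)) ↔
       (∀ w : ℕ → Bool, (∀ ψ ∈ T, evalC ψ w = true) → evalC φ w = true)) := by
  intro φ
  constructor
  · intro h w hw
    have hv : modelsLPs T (fun n => b2t (w n)) := by
      intro ψ hψ
      rw [evalS_b2t, hw ψ hψ]
      left; rfl
    have := h _ hv
    rw [evalS_b2t] at this
    cases hc : evalC φ w
    · rw [hc] at this
      rcases this with h1 | h1 <;> simp [b2t] at h1
    · rfl
  · intro h v hv
    have hnp := hcons v hv
    set w : ℕ → Bool := fun n => decide (v n = top) with hwdef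
    have hvw : v = fun n => b2t (w n) := by
      funext n
      cases hn : v n
      · simp [hwdef, b2t, hn]
      · exact absurd hn (hnp n)
      · simp [hwdef, b2t, hn]
    have hwT : ∀ ψ ∈ T, evalC ψ w = true := by
      intro ψ hψ
      have := hv ψ hψ
      rw [hvw, evalS_b2t] at this
      cases hc : evalC ψ w
      · rw [hc] at this; rcases this with h1 | h1 <;> simp [b2t] at h1
      · rfl
    have := h w hwT
    rw [hvw, evalS_b2t, this]
    left; rfl
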